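/- arXiv:2404.01601 — 4 statements merged into one kernel-verified Lean document; each statement's English description precedes it below -/
import Mathlib

section
/- Let x0, …, x_{N-1} be vectors in R^d such that every pair x_i, x_j (i ≠ j) is linearly independent, and let y : [N] → [N] be an injective labeling. Then there exists a matrix W ∈ R^{d × N} such that for every i and every j ≠ y(i), (x_i^T W)[y(i)] > (x_i^T W)[j]. -/
/-!
Take as column `y i` of `W` the unit vector `x i / ‖x i‖`. Then the score of `x i` in its own
column is `⟪x i, x i⟫ / ‖x i‖ = ‖x i‖`, while in the column of a template `x k`, `k ≠ i`, it is
`⟪x i, x k⟫ / ‖x k‖`, which is strictly smaller by the equality case of Cauchy–Schwarz, since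
`x i` and `x k` are not parallel.
-/

open scoped RealInnerProductSpace

section InnerProductSpace

variable {E : Type*} [NormedAddCommGroup E] [InnerProductSpace ℝ E]

theorem LinearIndependent.real_inner_lt_norm_mul {u v : E} (h : LinearIndependent ℝ ![u, v]) :
    ⟪u, v⟫ < ‖u‖ * ‖v‖ := by
  refine inner_lt_norm_mul_iff_real.mpr fun hpar => h.ne_zero 1 ?_
  have hcoef := LinearIndependent.pair_iff.mp h ‖v‖ (-‖u‖) (by rw [hpar, neg_smul, add_neg_cancel])
  simpa using hcoef.1

theorem LinearIndependent.real_inner_div_norm_lt_norm {u v : E} (h : LinearIndependent ℝ ![u, v]) :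
    ⟪u, v⟫ / ‖v‖ < ‖u‖ :=
  (div_lt_iff₀ (norm_pos_iff.mpr (h.ne_zero 1))).mpr h.real_inner_lt_norm_mul

end InnerProductSpace

theorem LinearIndependent.toLp_pair {n : Type*} {a b : n → ℝ} (h : LinearIndependent ℝ ![a, b]) :
    LinearIndependent ℝ ![WithLp.toLp 2 a, WithLp.toLp 2 b] := by
  rw [LinearIndependent.pair_iff] at h ⊢
  exact fun s t hst => h s t (by simpa using congrArg WithLp.ofLp hst)

/-- The norm is taken in `EuclideanSpace`: the norm on `n → ℝ` is the sup norm. -/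
noncomputable def normalizedColumnMatrix {ι κ n : Type*} [Fintype n] (x : ι → n → ℝ) (σ : κ → ι) :
    Matrix n κ ℝ :=
  Matrix.of fun k j => x (σ j) k / ‖WithLp.toLp 2 (x (σ j))‖

theorem vecMul_normalizedColumnMatrix {ι κ n : Type*} [Fintype n] (x : ι → n → ℝ) (σ : κ → ι)
    (v : n → ℝ) (j : κ) :
    Matrix.vecMul v (normalizedColumnMatrix x σ) j =
      ⟪WithLp.toLp 2 v, WithLp.toLp 2 (x (σ j))⟫ / ‖WithLp.toLp 2 (x (σ j))‖ := by
  simp only [normalizedColumnMatrix, Matrix.vecMul, dotProduct, Matrix.of_apply,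
    EuclideanSpace.inner_toLp_toLp, star_trivial, Finset.sum_div]
  exact Finset.sum_congr rfl fun _ _ => by ring

theorem stmt_2 {d N : ℕ} (x : Fin N → Fin d → ℝ)
    (hx : ∀ i j : Fin N, i ≠ j → LinearIndependent ℝ ![x i, x j])
    (y : Fin N → Fin N) (hy : Function.Injective y) :
    ∃ W : Matrix (Fin d) (Fin N) ℝ,
      ∀ i : Fin N, ∀ j : Fin N, j ≠ y i →
        Matrix.vecMul (x i) W (y i) > Matrix.vecMul (x i) W j := by
  let e : Fin N ≃ Fin N := Equiv.ofBijective y (Finite.injective_iff_bijective.mp hy)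
  refine ⟨normalizedColumnMatrix x e.symm, fun i j hj => ?_⟩
  have hij : i ≠ e.symm j := fun h => hj (by rw [h]; exact (e.apply_symm_apply j).symm)
  have hself : e.symm (y i) = i := e.symm_apply_apply i
  rw [vecMul_normalizedColumnMatrix, vecMul_normalizedColumnMatrix, hself,
    real_inner_self_eq_norm_mul_norm, mul_self_div_self]
  exact (hx i _ hij).toLp_pair.real_inner_div_norm_lt_norm
end

section
/- Let x0, …, x_{k-1}, x_k ∈ R^d be pairwise linearly independent, and suppose W = [w_0, …, w_{k-1}] ∈ R^{d × k} correctly classifies (x_i, i) for i < k by argmax. Then there exists Δw ∈ R^d and a scaling such that appending w_k = w_{i_k} + Δw (where i_k = argmax_j x_k^T w_j) yields a matrix in R^{d × (k+1)} that correctly classifies (x_i, i) for all i ≤ k by argmax. -/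
/-!
Linear independence of `x_k, x_{i_k}` gives `v` with `x_k ⬝ v > 0 > x_{i_k} ⬝ v`. Take
`Δw = ε v` with `ε > 0` so small that `ε (x_i ⬝ v)` stays below every positive margin
`x_i ⬝ w_i - x_i ⬝ w_{i_k}`. Then `x_k` prefers the new column to `w_{i_k}`, hence to every old
column; `x_{i_k}` prefers `w_{i_k}` to the new column; every other old point keeps its margin.
-/

open Matrix Filter Topology

theorem LinearIndependent.exists_dotProduct_eq {ι κ K : Type*} [Finite ι] [Fintype κ] [Field K]
    {x : ι → κ → K} (hx : LinearIndependent K x) (t : ι → K) :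
    ∃ v : κ → K, ∀ i, x i ⬝ᵥ v = t i := by
  have ht : t ∈ Submodule.span K (Set.range (flip x)) := by
    rw [span_flip_eq_top_iff_linearIndependent.2 hx]
    exact Submodule.mem_top
  obtain ⟨v, hv⟩ := (Submodule.mem_span_range_iff_exists_fun K).1 ht
  refine ⟨v, fun i => ?_⟩
  simp [← hv, dotProduct, flip, mul_comm]

theorem exists_dotProduct_pos_neg {κ : Type*} [Fintype κ] {a b : κ → ℝ}
    (h : LinearIndependent ℝ ![a, b]) :
    ∃ v : κ → ℝ, 0 < a ⬝ᵥ v ∧ b ⬝ᵥ v < 0 := by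
  obtain ⟨v, hv⟩ := h.exists_dotProduct_eq ![1, -1]
  refine ⟨v, ?_, ?_⟩
  · simp [show a ⬝ᵥ v = 1 by simpa using hv 0]
  · simp [show b ⬝ᵥ v = -1 by simpa using hv 1]

theorem eventually_nhds_zero_forall_mul_lt {ι : Type*} [Finite ι] (c m : ι → ℝ) :
    ∀ᶠ ε in 𝓝 (0 : ℝ), ∀ i, 0 < m i → ε * c i < m i := by
  refine eventually_all.2 fun i => ?_
  by_cases hm : 0 < m i
  · have hc : Tendsto (fun ε : ℝ => ε * c i) (𝓝 0) (𝓝 0) :=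
      (continuous_mul_const (c i)).tendsto' 0 0 (zero_mul _)
    exact (hc.eventually_lt_const hm).mono fun _ h _ => h
  · exact Eventually.of_forall fun _ h => absurd h hm

def ClassifiesByArgmax {ι κ : Type*} [Fintype κ] (x w : ι → κ → ℝ) : Prop :=
  ∀ i j, j ≠ i → x i ⬝ᵥ w j < x i ⬝ᵥ w i

theorem ClassifiesByArgmax.snoc {κ : Type*} [Fintype κ] {k : ℕ} {x : Fin (k + 1) → κ → ℝ}
    {w : Fin k → κ → ℝ} (hw : ClassifiesByArgmax (fun i => x i.castSucc) w) {u : κ → ℝ}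
    (hold : ∀ i : Fin k, x i.castSucc ⬝ᵥ u < x i.castSucc ⬝ᵥ w i)
    (hnew : ∀ j : Fin k, x (Fin.last k) ⬝ᵥ w j < x (Fin.last k) ⬝ᵥ u) :
    ClassifiesByArgmax x (Fin.snoc w u : Fin (k + 1) → κ → ℝ) := by
  intro i j hji
  induction i using Fin.lastCases with
  | last =>
    induction j using Fin.lastCases with
    | last => exact absurd rfl hji
    | cast j => simpa using hnew j
  | cast i =>
    induction j using Fin.lastCases with
    | last => simpa using hold i
    | cast j => simpa using hw i j (fun h => hji (h ▸ rfl))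

theorem stmt_4 {d k : ℕ} (x : Fin (k + 1) → Fin d → ℝ)
    (hx : ∀ i j : Fin (k + 1), i ≠ j → LinearIndependent ℝ ![x i, x j])
    (w : Fin k → Fin d → ℝ)
    (hcorrect : ∀ i j : Fin k, j ≠ i →
      x i.castSucc ⬝ᵥ w i > x i.castSucc ⬝ᵥ w j)
    (ik : Fin k)
    (hik : ∀ j : Fin k, x (Fin.last k) ⬝ᵥ w j ≤ x (Fin.last k) ⬝ᵥ w ik) :
    ∃ Δw : Fin d → ℝ,
      ∀ i j : Fin (k + 1), j ≠ i →
        x i ⬝ᵥ (Fin.snoc w (w ik + Δw) : Fin (k + 1) → Fin d → ℝ) i >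
        x i ⬝ᵥ (Fin.snoc w (w ik + Δw) : Fin (k + 1) → Fin d → ℝ) j := by
  obtain ⟨v, hv_last, hv_ik⟩ :=
    exists_dotProduct_pos_neg (hx _ _ (Fin.castSucc_lt_last ik).ne')
  have hsmall := eventually_nhds_zero_forall_mul_lt (fun i => x i.castSucc ⬝ᵥ v)
    (fun i => x i.castSucc ⬝ᵥ w i - x i.castSucc ⬝ᵥ w ik)
  obtain ⟨ε, hsmall, hε⟩ :=
    ((hsmall.filter_mono nhdsWithin_le_nhds).and self_mem_nhdsWithin).exists (f := 𝓝[>] 0)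
  refine ⟨ε • v, ClassifiesByArgmax.snoc hcorrect (fun i => ?_) (fun j => ?_)⟩
  · simp only [dotProduct_add, dotProduct_smul, smul_eq_mul]
    rcases eq_or_ne i ik with rfl | hi
    · linarith [mul_neg_of_pos_of_neg (Set.mem_Ioi.1 hε) hv_ik]
    · linarith [hsmall i (sub_pos.2 (hcorrect i ik hi.symm))]
  · simp only [dotProduct_add, dotProduct_smul, smul_eq_mul]
    linarith [hik j, mul_pos (Set.mem_Ioi.1 hε) hv_last]
end

section
/- Fix an alphabet X of tokens with |X| = m and a template t of length n over wildcards (a function from positions [n] to a wildcard set), and let D(t) be the set of all sequences sub(t, s) obtained from injective substitution maps s from the wildcards of t into X. Then for every position j ∈ [n] and every token x ∈ X, the number of sequences in D(t) whose j-th token equals x is |D(t)| / m. -/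
/-- The set of sequences generated by substituting the wildcards of a
template `t` by injective maps into the token alphabet `X`. -/
def templateSeqs {W X : Type*} [Fintype W] [DecidableEq W] [Fintype X] [DecidableEq X]
    {n : ℕ} (t : Fin n → W) : Finset (Fin n → X) :=
  (Finset.univ.filter (Function.Injective : (W → X) → Prop)).image
    (fun s => fun i => s (t i))

/-! Relabelling the tokens by the transposition `(x y)` maps the sequences with `x` at
position `j` bijectively onto those with `y` there, and it preserves `D(t)` because a
permutation composed with an injective substitution is again one. So the `m` fibres of
`f ↦ f j` all have the same size. -/

section PermInvariant

variable {ι X : Type*} [DecidableEq X] {S : Finset (ι → X)}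

theorem card_filter_apply_eq_of_perm_comp_mem
    (hS : ∀ σ : Equiv.Perm X, ∀ f ∈ S, σ ∘ f ∈ S) (j : ι) (x y : X) :
    (S.filter (fun f => f j = x)).card = (S.filter (fun f => f j = y)).card := by
  refine Finset.card_nbij' (Equiv.swap x y ∘ ·) (Equiv.swap x y ∘ ·) ?_ ?_ ?_ ?_
  all_goals intro f hf
  iterate 2
    simp only [Finset.coe_filter, Set.mem_ofPred_eq] at hf ⊢
    exact ⟨hS _ f hf.1, by simp [hf.2]⟩
  all_goals ext i; simp

theorem card_mul_card_filter_apply_eq_of_perm_comp_mem [Fintype X]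
    (hS : ∀ σ : Equiv.Perm X, ∀ f ∈ S, σ ∘ f ∈ S) (j : ι) (x : X) :
    Fintype.card X * (S.filter (fun f => f j = x)).card = S.card := by
  rw [Finset.card_eq_sum_card_fiberwise (s := S) (fun f _ => Finset.mem_univ (f j)),
    Finset.sum_congr rfl fun y _ => card_filter_apply_eq_of_perm_comp_mem hS j y x,
    Finset.sum_const, Finset.card_univ, smul_eq_mul]

end PermInvariant

theorem perm_comp_mem_templateSeqs {W X : Type*} [Fintype W] [DecidableEq W] [Fintype X]
    [DecidableEq X] {n : ℕ} (t : Fin n → W) (σ : Equiv.Perm X) {f : Fin n → X}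
    (hf : f ∈ templateSeqs (X := X) t) : σ ∘ f ∈ templateSeqs (X := X) t := by
  simp only [templateSeqs, Finset.mem_image, Finset.mem_filter, Finset.mem_univ,
    true_and] at hf ⊢
  obtain ⟨s, hs, rfl⟩ := hf
  exact ⟨σ ∘ s, σ.injective.comp hs, rfl⟩

theorem stmt_6_general {W X : Type*} [Fintype W] [DecidableEq W] [Fintype X] [DecidableEq X]
    {n m : ℕ} (hm : Fintype.card X = m) (t : Fin n → W)
    (j : Fin n) (x : X) :
    m * ((templateSeqs (X := X) t).filter (fun f => f j = x)).card =
      (templateSeqs (X := X) t).card := by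
  subst hm
  exact card_mul_card_filter_apply_eq_of_perm_comp_mem
    (fun σ _ hf => perm_comp_mem_templateSeqs t σ hf) j x

theorem stmt_6 {W X : Type*} [Fintype W] [DecidableEq W] [Fintype X] [DecidableEq X]
    {n m : ℕ} (hm : Fintype.card X = m) (t : Fin n → W)
    (ht : Function.Surjective t) (j : Fin n) (x : X) :
    m * ((templateSeqs (X := X) t).filter (fun f => f j = x)).card =
      (templateSeqs (X := X) t).card :=
  stmt_6_general hm t j x
end

section
/- Let X be a finite token set, W_V ∈ R^{c×d}, emb : X → R^d, and σ'(s, x) = exp(emb(s)^T W_QK emb(x)) for some W_QK. Suppose sequences X^{(0)}, …, X^{(N-1)} ∈ X^n all end with the same token r and are dependent with integer coefficients λ_i. Define λ'_i = λ_i · Σ_{j=0}^{n-1} σ'(X^{(i)}_j, r) and the softmax-attention output o^{(i)} = emb(r) + (Σ_j W_V emb(X^{(i)}_j) σ'(X^{(i)}_j, r)) / (Σ_j σ'(X^{(i)}_j, r)). Then Σ_{i=0}^{N-1} λ'_i o^{(i)} = 0. -/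
/-!
Multiplying the softmax output of sequence `i` by its normalizer `D i = ∑ j σ'(X^{(i)}_j, r)`,
a sum of exponentials and so nonzero, clears the denominator:
`D i • o i = ∑ j σ'(X^{(i)}_j, r) • (emb r + W_V emb(X^{(i)}_j))`, a sum over positions of a fixed
function of the token at that position. Dependence says that, position by position, the
coefficients `λ_i` sum to zero over each fibre of the token map, so any such position-wise sum is
annihilated by the `λ_i`.
-/

open Finset Matrix

section Dependence

variable {ι κ α M : Type*} [Fintype ι] [DecidableEq α] [AddCommGroup M]

theorem sum_zsmul_comp_eq_zero_of_fiber_sum_eq_zero (x : ι → α) (lam : ι → ℤ)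
    (hfiber : ∀ a, ∑ i ∈ univ.filter (fun i => x i = a), lam i = 0) (F : α → M) :
    ∑ i, lam i • F (x i) = 0 := by
  rw [← sum_fiberwise_of_maps_to (fun i _ => mem_image_of_mem x (mem_univ i))]
  refine sum_eq_zero fun a _ => ?_
  calc ∑ i ∈ univ.filter (fun i => x i = a), lam i • F (x i)
      = ∑ i ∈ univ.filter (fun i => x i = a), lam i • F a :=
        sum_congr rfl fun i hi => by rw [(mem_filter.mp hi).2]
    _ = 0 := by rw [← sum_smul, hfiber a, zero_smul]

theorem sum_zsmul_sum_eq_zero_of_dependent [Fintype κ] (Xs : ι → κ → α) (lam : ι → ℤ)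
    (hdep : ∀ j a, ∑ i ∈ univ.filter (fun i => Xs i j = a), lam i = 0) (F : α → M) :
    ∑ i, lam i • ∑ j, F (Xs i j) = 0 := by
  simp_rw [smul_sum]
  rw [sum_comm]
  exact sum_eq_zero fun j _ =>
    sum_zsmul_comp_eq_zero_of_fiber_sum_eq_zero (Xs · j) lam (hdep j) F

end Dependence

theorem sum_smul_add_div_sum {κ δ 𝕜 : Type*} [Fintype κ] [Field 𝕜] (w : κ → 𝕜)
    (hw : ∑ j, w j ≠ 0) (e : δ → 𝕜) (v : κ → δ → 𝕜) :
    (∑ j, w j) • (e + (∑ j, w j • v j) / (fun _ => ∑ j, w j)) = ∑ j, w j • (e + v j) := by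
  have hcancel : (∑ j, w j) • ((∑ j, w j • v j) / (fun _ => ∑ j, w j)) = ∑ j, w j • v j := by
    funext k
    exact mul_div_cancel₀ _ hw
  rw [smul_add, hcancel, sum_smul]
  simp only [smul_add, sum_add_distrib]

theorem stmt_18_general {X : Type*} [DecidableEq X] {d n N : ℕ}
    (emb : X → Fin d → ℝ) (WV WQK : Matrix (Fin d) (Fin d) ℝ)
    (σ' : X → X → ℝ)
    (hσ : ∀ s x : X, σ' s x = Real.exp (emb s ⬝ᵥ WQK.mulVec (emb x)))
    (Xs : Fin N → Fin (n + 1) → X) (r : X)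
    (lam : Fin N → ℤ)
    (hdep : ∀ (j : Fin (n + 1)) (x : X),
      ∑ i ∈ univ.filter (fun i => Xs i j = x), lam i = 0)
    (lam' : Fin N → ℝ)
    (hlam' : ∀ i, lam' i = (lam i : ℝ) * ∑ j : Fin (n + 1), σ' (Xs i j) r)
    (o : Fin N → Fin d → ℝ)
    (ho : ∀ i, o i = emb r +
      (∑ j : Fin (n + 1), σ' (Xs i j) r • WV.mulVec (emb (Xs i j))) /
        (fun _ => ∑ j : Fin (n + 1), σ' (Xs i j) r)) :
    ∑ i : Fin N, lam' i • o i = 0 := by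
  have hnorm : ∀ i, ∑ j : Fin (n + 1), σ' (Xs i j) r ≠ 0 := fun i =>
    (sum_pos (fun j _ => by rw [hσ]; exact Real.exp_pos _) univ_nonempty).ne'
  calc ∑ i, lam' i • o i
      = ∑ i, lam i • ∑ j, σ' (Xs i j) r • (emb r + WV.mulVec (emb (Xs i j))) := by
        refine sum_congr rfl fun i _ => ?_
        rw [hlam', ho, mul_smul, sum_smul_add_div_sum _ (hnorm i), Int.cast_smul_eq_zsmul]
    _ = 0 := sum_zsmul_sum_eq_zero_of_dependent Xs lam hdep
        fun x => σ' x r • (emb r + WV.mulVec (emb x))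

theorem stmt_18 {X : Type*} [DecidableEq X] {d n N : ℕ}
    (emb : X → Fin d → ℝ) (WV WQK : Matrix (Fin d) (Fin d) ℝ)
    (σ' : X → X → ℝ)
    (hσ : ∀ s x : X, σ' s x = Real.exp (emb s ⬝ᵥ WQK.mulVec (emb x)))
    (Xs : Fin N → Fin (n + 1) → X) (r : X)
    (hr : ∀ i, Xs i (Fin.last n) = r)
    (lam : Fin N → ℤ)
    (hdep : ∀ (j : Fin (n + 1)) (x : X),
      ∑ i ∈ univ.filter (fun i => Xs i j = x), lam i = 0)
    (lam' : Fin N → ℝ)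
    (hlam' : ∀ i, lam' i = (lam i : ℝ) * ∑ j : Fin (n + 1), σ' (Xs i j) r)
    (o : Fin N → Fin d → ℝ)
    (ho : ∀ i, o i = emb r +
      (∑ j : Fin (n + 1), σ' (Xs i j) r • WV.mulVec (emb (Xs i j))) /
        (fun _ => ∑ j : Fin (n + 1), σ' (Xs i j) r)) :
    ∑ i : Fin N, lam' i • o i = 0 :=
  stmt_18_general emb WV WQK σ' hσ Xs r lam hdep lam' hlam' o ho
end
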